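/- Let p,q ≥ 0 with p+q < 1 and ε > 0. Let h denote the binary entropy in nats and set φ = (h(p)−h(q))/(1−p−q). Define m_COUNT = (1/D_KL(q‖1/(1+e^φ)))·k·log(n/k). If m ≤ (1−ε)·m_COUNT, then for every non-adaptive test design with m tests (any, possibly random, binary m×n test matrix) and every estimator of σ from the displayed test outcomes under the p–q noise channel, the probability of exactly recovering σ does not tend to 1 as n → ∞. -/

import Mathlib

open MeasureTheory Real Filter Set
open scoped ENNReal

noncomputable section

/-- KL divergence between Bernoulli(r) and Bernoulli(s) (natural log, boundary by continuity). -/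
def klBer (r s : ℝ) : ℝ := r * Real.log (r / s) + (1 - r) * Real.log ((1 - r) / (1 - s))

/-- Binary entropy in nats. -/
def binEnt (x : ℝ) : ℝ := -x * Real.log x - (1 - x) * Real.log (1 - x)

instance finsetFinMeasurableSpace (n : ℕ) : MeasurableSpace (Finset (Fin n)) := ⊤

/-- Uniform probability measure on a finset. -/
def uniformFinset {α : Type*} [MeasurableSpace α] (s : Finset α) : Measure α :=
  (s.card : ℝ≥0∞)⁻¹ • ∑ x ∈ s, Measure.dirac x

/-- Bernoulli measure on `Bool` giving probability `p` to `true`. -/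
def bern (p : ℝ) : Measure Bool :=
  ENNReal.ofReal p • Measure.dirac true + ENNReal.ofReal (1 - p) • Measure.dirac false

/-- Infection-status vectors of Hamming weight `k`. -/
def sigmaSet (n k : ℕ) : Finset (Fin n → Bool) :=
  Finset.univ.filter fun σ => (Finset.univ.filter fun i => σ i = true).card = k

/-- Sample space for a general (possibly random) non-adaptive design: (infection status,
test matrix given as the pool of each of the `m` tests, negative-test flips `U ~ Bern(p)`,
positive-test flips `V ~ Bern(q)`). -/
abbrev GenSpace (n m : ℕ) :=
  (Fin n → Bool) × (Fin m → Finset (Fin n)) × (Fin m → Bool) × (Fin m → Bool)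

/-- Joint law for an arbitrary (random) non-adaptive design `ν` under p–q noise. -/
def genMeasure (n m k : ℕ) (ν : Measure (Fin m → Finset (Fin n))) (p q : ℝ) :
    Measure (GenSpace n m) :=
  (uniformFinset (sigmaSet n k)).prod (ν.prod
    ((Measure.pi fun _ : Fin m => bern p).prod (Measure.pi fun _ : Fin m => bern q)))

/-- Displayed outcome of test `a` for a general design. -/
def displayedGen {n m : ℕ} (σ : Fin n → Bool) (A : Fin m → Finset (Fin n))
    (U V : Fin m → Bool) (a : Fin m) : Bool :=
  if ∃ i ∈ A a, σ i = true then !(V a) else U a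

/-!
Condition on the design. Given `σ`, the displayed outcomes are independent Bernoulli variables;
compare their law with the product reference law `Bern(1 - s*)^m`, `s* = 1 / (1 + e^φ)`. The
exponent `φ` is exactly what makes every test, truly positive or not, have the same expected
log-likelihood ratio `C = D(q ‖ s*)`. The information density of `m` tests therefore has mean
`m C` and variance `O(m)`, so by Chebyshev it exceeds `m C + c` with probability `O(m / c²)`.
Off that event the likelihood is at most `e^{m C + c}` times the reference law, and as the
decoding regions of distinct `σ` are disjoint, the estimator is right with probability at most
`e^{m C + c} / (n choose k)`. With `m C ≤ (1 - ε) k log (n / k) ≤ (1 - ε) log (n choose k)` and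
`c = ε k log (n / k) / 2`, both terms vanish as `k log (n / k) → ∞`.
-/

open Finset

lemma klBer_self (s : ℝ) : klBer s s = 0 := by
  have h : ∀ x : ℝ, x * Real.log (x / x) = 0 := fun x => by
    rcases eq_or_ne x 0 with rfl | hx <;> simp [*]
  simp only [klBer, h, add_zero]

lemma klBer_one_sub (r s : ℝ) : klBer (1 - r) (1 - s) = klBer r s := by
  simp only [klBer, sub_sub_cancel]
  ring

lemma klBer_eq_klFun {r s : ℝ} (hs0 : 0 < s) (hs1 : s < 1) :
    klBer r s = s * InformationTheory.klFun (r / s) +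
      (1 - s) * InformationTheory.klFun ((1 - r) / (1 - s)) := by
  have : 1 - s ≠ 0 := by linarith
  simp only [klBer, InformationTheory.klFun_apply]
  field_simp
  ring

lemma klBer_pos {r s : ℝ} (hr0 : 0 ≤ r) (hr1 : r ≤ 1) (hs0 : 0 < s) (hs1 : s < 1)
    (hne : r ≠ s) : 0 < klBer r s := by
  rw [klBer_eq_klFun hs0 hs1]
  have hpos : 0 < InformationTheory.klFun (r / s) := by
    refine lt_of_le_of_ne (InformationTheory.klFun_nonneg (by positivity)) fun h => hne ?_
    rwa [eq_comm, InformationTheory.klFun_eq_zero_iff (by positivity),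
      div_eq_one_iff_eq hs0.ne'] at h
  have := InformationTheory.klFun_nonneg (x := (1 - r) / (1 - s))
    (div_nonneg (by linarith) (by linarith))
  have : 0 < 1 - s := by linarith
  positivity

lemma klBer_eq_neg_binEnt_sub {r s : ℝ} (hs0 : s ≠ 0) (hs1 : 1 - s ≠ 0) :
    klBer r s = -binEnt r - r * Real.log s - (1 - r) * Real.log (1 - s) := by
  have h : ∀ x y : ℝ, y ≠ 0 → x * Real.log (x / y) = x * Real.log x - x * Real.log y := by
    intro x y hy
    rcases eq_or_ne x 0 with rfl | hx
    · simp
    · rw [Real.log_div hx hy]; ring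
  rw [klBer, h _ _ hs0, h _ _ hs1, binEnt]
  ring

def channelPhi (p q : ℝ) : ℝ := (binEnt p - binEnt q) / (1 - p - q)

/-- The probability of a displayed negative under the capacity-achieving output law. -/
def capacityNegProb (p q : ℝ) : ℝ := 1 / (1 + Real.exp (channelPhi p q))

def capacity (p q : ℝ) : ℝ := klBer q (capacityNegProb p q)

lemma capacityNegProb_pos (p q : ℝ) : 0 < capacityNegProb p q := by
  unfold capacityNegProb; positivity

lemma capacityNegProb_lt_one (p q : ℝ) : capacityNegProb p q < 1 := by
  have := Real.exp_pos (channelPhi p q)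
  rw [capacityNegProb, div_lt_one (by linarith)]
  linarith

/-- Both rows of the channel are at the same divergence from the capacity-achieving output law;
this is what defines `φ`. -/
lemma klBer_one_sub_capacityNegProb {p q : ℝ} (hpq : p + q ≠ 1) :
    klBer p (1 - capacityNegProb p q) = capacity p q := by
  set s := capacityNegProb p q
  have hs0 := capacityNegProb_pos p q
  have hs1 := capacityNegProb_lt_one p q
  have hφ : Real.log (1 - s) - Real.log s = channelPhi p q := by
    have : 1 - s = Real.exp (channelPhi p q) * s := by
      simp only [s, capacityNegProb]; field_simp; ring
    rw [this, Real.log_mul (Real.exp_pos _).ne' hs0.ne', Real.log_exp]; ring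
  have hpq' : 1 - p - q ≠ 0 := fun h => hpq (by linarith)
  have hdef : (1 - p - q) * channelPhi p q = binEnt p - binEnt q := by
    rw [channelPhi]; field_simp
  rw [capacity, klBer_eq_neg_binEnt_sub (by linarith) (by simp; linarith),
    klBer_eq_neg_binEnt_sub hs0.ne' (by linarith), sub_sub_cancel]
  linear_combination (1 - p - q) * hφ + hdef

lemma capacity_pos {p q : ℝ} (hp : 0 ≤ p) (hq : 0 ≤ q) (hpq : p + q < 1) :
    0 < capacity p q := by
  have hs0 := capacityNegProb_pos p q
  have hs1 := capacityNegProb_lt_one p q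
  by_cases hqs : q = capacityNegProb p q
  · have hcap : capacity p q = 0 := by rw [capacity, ← hqs, klBer_self]
    rw [← klBer_one_sub_capacityNegProb hpq.ne] at hcap ⊢
    refine klBer_pos hp (by linarith) (by linarith) (by linarith) fun h => ?_
    linarith
  · exact klBer_pos hq (by linarith) hs0 hs1 hqs

section ProductWeights

variable {ι β : Type*} [Fintype ι] [DecidableEq ι] [Fintype β]

lemma sum_prod_mul_prod {R : Type*} [CommSemiring R] (ρ g : ι → β → R) :
    ∑ y : ι → β, (∏ a, ρ a (y a)) * ∏ a, g a (y a) = ∏ a, ∑ b, ρ a b * g a b := by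
  simp_rw [Fintype.prod_sum, prod_mul_distrib]

variable {R : Type*} [CommSemiring R] {ρ : ι → β → R}

lemma sum_prod_eq_one (hρ : ∀ a, ∑ b, ρ a b = 1) : ∑ y : ι → β, ∏ a, ρ a (y a) = 1 := by
  simpa [hρ] using sum_prod_mul_prod ρ fun _ _ => (1 : R)

lemma sum_prod_mul_apply (hρ : ∀ a, ∑ b, ρ a b = 1) (a₀ : ι) (f : β → R) :
    ∑ y : ι → β, (∏ a, ρ a (y a)) * f (y a₀) = ∑ b, ρ a₀ b * f b := by
  have h := sum_prod_mul_prod ρ fun a b => if a = a₀ then f b else 1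
  rw [prod_eq_single a₀ (fun a _ ha => by simp [ha, hρ a]) (by simp)] at h
  simpa [prod_ite_eq'] using h

lemma sum_prod_mul_apply_mul_apply (hρ : ∀ a, ∑ b, ρ a b = 1) {a₀ a₁ : ι} (hne : a₀ ≠ a₁)
    (f g : β → R) :
    ∑ y : ι → β, (∏ a, ρ a (y a)) * (f (y a₀) * g (y a₁)) =
      (∑ b, ρ a₀ b * f b) * ∑ b, ρ a₁ b * g b := by
  have h := sum_prod_mul_prod ρ fun a b => (if a = a₀ then f b else 1) * if a = a₁ then g b else 1
  rw [prod_eq_mul a₀ a₁ hne (fun a _ ha => by simp [ha.1, ha.2, hρ a]) (by simp) (by simp)]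
    at h
  simp only [if_neg hne, if_neg hne.symm, if_true, mul_one, one_mul] at h
  rw [← h]
  refine sum_congr rfl fun y _ => ?_
  rw [prod_mul_distrib, prod_ite_eq', prod_ite_eq']
  simp

/-- Centred coordinates are uncorrelated under a product weight, so their variances add up. -/
lemma sum_prod_mul_sq_sum {ρ : ι → β → ℝ} (hρ : ∀ a, ∑ b, ρ a b = 1) (h : ι → β → ℝ)
    (hh : ∀ a, ∑ b, ρ a b * h a b = 0) :
    ∑ y : ι → β, (∏ a, ρ a (y a)) * (∑ a, h a (y a)) ^ 2 = ∑ a, ∑ b, ρ a b * h a b ^ 2 := by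
  have hterm : ∀ a a' : ι, ∑ y : ι → β, (∏ c, ρ c (y c)) * (h a (y a) * h a' (y a')) =
      if a = a' then ∑ b, ρ a b * h a b ^ 2 else 0 := by
    intro a a'
    split_ifs with haa
    · subst haa
      have := sum_prod_mul_apply hρ a fun b => h a b ^ 2
      simpa only [sq] using this
    · rw [sum_prod_mul_apply_mul_apply hρ haa, hh, zero_mul]
  simp_rw [sq, sum_mul_sum, mul_sum]
  rw [sum_comm]
  simp_rw [sum_comm (γ := ι → β) (s := univ), ← sq, hterm, sum_ite_eq, Finset.mem_univ, if_true]

end ProductWeights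

lemma sum_sum_prod_mul_prod_mul_comp {ι α β γ R : Type*} [Fintype ι] [DecidableEq ι]
    [Fintype α] [Fintype β] [Fintype γ] [DecidableEq γ] [CommSemiring R]
    (π₁ : ι → α → R) (π₂ : ι → β → R) (φ : ι → α → β → γ) (f : (ι → γ) → R) :
    ∑ u : ι → α, ∑ v : ι → β, (∏ a, π₁ a (u a)) * (∏ a, π₂ a (v a)) *
        f (fun a => φ a (u a) (v a)) =
      ∑ y : ι → γ, (∏ a, ∑ s, ∑ t, if φ a s t = y a then π₁ a s * π₂ a t else 0) * f y := by
  have hexpand : ∀ y : ι → γ,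
      ∏ a, ∑ s, ∑ t, (if φ a s t = y a then π₁ a s * π₂ a t else 0) =
        ∑ u : ι → α, ∑ v : ι → β, if (fun a => φ a (u a) (v a)) = y
          then (∏ a, π₁ a (u a)) * ∏ a, π₂ a (v a) else 0 := by
    intro y
    rw [Fintype.prod_sum]
    refine sum_congr rfl fun u _ => ?_
    rw [Fintype.prod_sum]
    refine sum_congr rfl fun v _ => ?_
    rw [prod_ite_zero, prod_mul_distrib]
    by_cases h : ∀ a, φ a (u a) (v a) = y a
    · rw [if_pos fun a _ => h a, if_pos (funext h)]
    · rw [if_neg fun h' => h fun a => h' a (Finset.mem_univ a), if_neg fun h' => h (congrFun h')]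
  simp_rw [hexpand, sum_mul]
  rw [eq_comm, sum_comm]
  refine sum_congr rfl fun u _ => ?_
  rw [sum_comm]
  refine sum_congr rfl fun v _ => ?_
  simp_rw [ite_mul, zero_mul]
  rw [sum_ite_eq, if_pos (Finset.mem_univ _)]

lemma sum_filter_le_sum_mul_sq_div {Y : Type*} [Fintype Y] {w g : Y → ℝ} (hw : ∀ y, 0 ≤ w y)
    {c : ℝ} (hc : 0 < c) :
    ∑ y with c ≤ g y, w y ≤ (∑ y, w y * g y ^ 2) / c ^ 2 := by
  rw [le_div_iff₀ (by positivity), sum_mul]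
  calc ∑ y with c ≤ g y, w y * c ^ 2 ≤ ∑ y with c ≤ g y, w y * g y ^ 2 :=
        sum_le_sum fun y hy => by
          have := (mem_filter.mp hy).2
          gcongr
          exact hw y
    _ ≤ ∑ y, w y * g y ^ 2 :=
        sum_le_sum_of_subset_of_nonneg (filter_subset _ _) fun y _ _ =>
          mul_nonneg (hw y) (sq_nonneg _)

/-- The information-spectrum converse. Off the `bad` event the decoding regions of the messages
in `Θ` are disjoint and each carries at most `M` times its `Q`-mass. -/
lemma sum_ite_decode_le {α Y : Type*} [Fintype Y] [DecidableEq α] (Θ : Finset α)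
    {P : α → Y → ℝ} {Q : Y → ℝ} (hP : ∀ σ y, 0 ≤ P σ y) (hQ : ∀ y, 0 ≤ Q y) (decode : Y → α)
    (bad : α → Y → Prop) [∀ σ y, Decidable (bad σ y)] {M : ℝ} (hM : 0 ≤ M)
    (hgood : ∀ σ y, ¬ bad σ y → P σ y ≤ M * Q y) :
    ∑ σ ∈ Θ, ∑ y, (if decode y = σ then P σ y else 0) ≤
      ∑ σ ∈ Θ, ∑ y with bad σ y, P σ y + M * ∑ y, Q y := by
  have hpt : ∀ σ y, (if decode y = σ then P σ y else 0) ≤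
      (if bad σ y then P σ y else 0) + M * if decode y = σ then Q y else 0 := by
    intro σ y
    have := hP σ y
    have := mul_nonneg hM (hQ y)
    by_cases hd : decode y = σ <;> by_cases hb : bad σ y <;>
      simp [hd, hb, hgood σ y] <;> linarith
  have hdisjoint : ∀ y, ∑ σ ∈ Θ, (if decode y = σ then Q y else 0) ≤ Q y := by
    intro y
    rw [sum_ite_eq]
    split_ifs
    exacts [le_rfl, hQ y]
  calc ∑ σ ∈ Θ, ∑ y, (if decode y = σ then P σ y else 0)
      ≤ ∑ σ ∈ Θ, ∑ y, ((if bad σ y then P σ y else 0) + M * if decode y = σ then Q y else 0) :=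
        sum_le_sum fun σ _ => sum_le_sum fun y _ => hpt σ y
    _ = ∑ σ ∈ Θ, ∑ y with bad σ y, P σ y +
          M * ∑ y, ∑ σ ∈ Θ, (if decode y = σ then Q y else 0) := by
        simp only [sum_add_distrib, sum_filter, mul_sum]
        congr 1
        exact sum_comm
    _ ≤ ∑ σ ∈ Θ, ∑ y with bad σ y, P σ y + M * ∑ y, Q y := by
        gcongr with y
        exact hdisjoint y

lemma prod_le_exp_mul_prod {ι : Type*} [Fintype ι] {x t : ι → ℝ} (hx : ∀ a, 0 ≤ x a)
    (ht : ∀ a, 0 < t a) {γ : ℝ} (h : ∑ a, Real.log (x a / t a) ≤ γ) :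
    ∏ a, x a ≤ Real.exp γ * ∏ a, t a := by
  by_cases hpos : ∀ a, 0 < x a
  · calc ∏ a, x a = Real.exp (∑ a, Real.log (x a / t a)) * ∏ a, t a := by
          rw [Real.exp_sum, ← prod_mul_distrib]
          refine prod_congr rfl fun a _ => ?_
          rw [Real.exp_log (div_pos (hpos a) (ht a)), div_mul_cancel₀ _ (ht a).ne']
      _ ≤ Real.exp γ * ∏ a, t a := by
          gcongr
          exact prod_nonneg fun a _ => (ht a).le
  · push Not at hpos
    obtain ⟨a, ha⟩ := hpos
    rw [prod_eq_zero (mem_univ a) (le_antisymm ha (hx a))]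
    exact mul_nonneg (Real.exp_nonneg γ) (prod_nonneg fun a _ => (ht a).le)

instance (n : ℕ) : DiscreteMeasurableSpace (Finset (Fin n)) :=
  ⟨fun _ => MeasurableSpace.measurableSet_top⟩

instance (r : ℝ) : IsFiniteMeasure (bern r) := ⟨by simp [bern]⟩

instance {α : Type*} [MeasurableSpace α] (s : Finset α) : IsFiniteMeasure (uniformFinset s) := by
  refine ⟨?_⟩
  rcases s.eq_empty_or_nonempty with rfl | hs
  · simp [uniformFinset]
  · simp [uniformFinset, ENNReal.inv_mul_cancel, hs.ne_empty]

instance (n m k : ℕ) (ν : Measure (Fin m → Finset (Fin n))) [IsFiniteMeasure ν] (p q : ℝ) :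
    IsFiniteMeasure (genMeasure n m k ν p q) := by
  unfold genMeasure; infer_instance

lemma measureReal_eq_sum_ite {α : Type*} [Fintype α] [MeasurableSpace α]
    [MeasurableSingletonClass α] (μ : Measure α) [IsFiniteMeasure μ] (E : Set α)
    [DecidablePred (· ∈ E)] :
    μ.real E = ∑ x, if x ∈ E then μ.real {x} else 0 := by
  rw [← sum_filter, sum_measureReal_singleton]
  congr
  ext
  simp

lemma measureReal_pi_singleton {ι : Type*} [Fintype ι] {X : ι → Type*}
    [∀ a, MeasurableSpace (X a)] (μ : ∀ a, Measure (X a)) [∀ a, SigmaFinite (μ a)]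
    (x : ∀ a, X a) : (Measure.pi μ).real {x} = ∏ a, (μ a).real {x a} := by
  rw [measureReal_def, ← Set.univ_pi_singleton, Measure.pi_pi, ENNReal.toReal_prod]
  rfl

lemma uniformFinset_real_singleton {α : Type*} [MeasurableSpace α] [MeasurableSingletonClass α]
    [DecidableEq α] (s : Finset α) (x : α) :
    (uniformFinset s).real {x} = if x ∈ s then ((s.card : ℝ))⁻¹ else 0 := by
  split_ifs with hx <;> simp [measureReal_def, uniformFinset, Measure.finsetSum_apply, hx]

def bernPmf (r : ℝ) (b : Bool) : ℝ := if b then r else 1 - r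

lemma sum_bernPmf (r : ℝ) : ∑ b, bernPmf r b = 1 := by simp [bernPmf]

lemma bernPmf_nonneg {r : ℝ} (h0 : 0 ≤ r) (h1 : r ≤ 1) (b : Bool) : 0 ≤ bernPmf r b := by
  cases b <;> simp [bernPmf] <;> linarith

lemma bernPmf_pos {r : ℝ} (h0 : 0 < r) (h1 : r < 1) (b : Bool) : 0 < bernPmf r b := by
  cases b <;> simp [bernPmf] <;> linarith

lemma sum_bernPmf_mul_log_div (r t : ℝ) :
    ∑ b, bernPmf r b * Real.log (bernPmf r b / bernPmf t b) = klBer r t := by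
  simp [bernPmf, klBer]

lemma bern_real_singleton {r : ℝ} (h0 : 0 ≤ r) (h1 : r ≤ 1) (b : Bool) :
    (bern r).real {b} = bernPmf r b := by
  cases b <;> simp [measureReal_def, bern, bernPmf, h0, h1]

section Channel

variable (p q : ℝ) {n m : ℕ} (σ : Fin n → Bool) (A : Fin m → Finset (Fin n))

def posDisplayProb (a : Fin m) : ℝ := if ∃ i ∈ A a, σ i = true then 1 - q else p

def likelihood (y : Fin m → Bool) : ℝ := ∏ a, bernPmf (posDisplayProb p q σ A a) (y a)

def testLLR (a : Fin m) (b : Bool) : ℝ :=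
  Real.log (bernPmf (posDisplayProb p q σ A a) b / bernPmf (1 - capacityNegProb p q) b)

def llrBound : ℝ :=
  ∑ r ∈ ({p, 1 - q} : Finset ℝ), ∑ b,
    |Real.log (bernPmf r b / bernPmf (1 - capacityNegProb p q) b) - capacity p q|

lemma abs_testLLR_sub_le (a : Fin m) (b : Bool) :
    |testLLR p q σ A a b - capacity p q| ≤ llrBound p q := by
  have hmem : posDisplayProb p q σ A a ∈ ({p, 1 - q} : Finset ℝ) := by
    unfold posDisplayProb; split_ifs <;> simp
  refine le_trans ?_ (single_le_sum (fun r _ => sum_nonneg fun b _ => abs_nonneg _) hmem)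
  exact single_le_sum (f := fun b => |Real.log (bernPmf (posDisplayProb p q σ A a) b /
    bernPmf (1 - capacityNegProb p q) b) - capacity p q|) (fun b _ => abs_nonneg _)
    (mem_univ b)

variable {p q}

lemma bernPmf_posDisplayProb_nonneg (hp : 0 ≤ p) (hq : 0 ≤ q) (hpq : p + q < 1) (a : Fin m)
    (b : Bool) : 0 ≤ bernPmf (posDisplayProb p q σ A a) b := by
  unfold posDisplayProb
  split_ifs <;> exact bernPmf_nonneg (by linarith) (by linarith) b

lemma sum_bernPmf_mul_testLLR (hpq : p + q ≠ 1) (a : Fin m) :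
    ∑ b, bernPmf (posDisplayProb p q σ A a) b * testLLR p q σ A a b = capacity p q := by
  simp only [testLLR]
  rw [sum_bernPmf_mul_log_div, posDisplayProb]
  split_ifs
  · rw [klBer_one_sub, capacity]
  · exact klBer_one_sub_capacityNegProb hpq

/-- Chebyshev's inequality for the information density, whose mean is `m * capacity p q`
whatever `σ` and `A` are. -/
lemma sum_likelihood_filter_le (hp : 0 ≤ p) (hq : 0 ≤ q) (hpq : p + q < 1) {c : ℝ}
    (hc : 0 < c) :
    ∑ y with c ≤ ∑ a, testLLR p q σ A a (y a) - m * capacity p q, likelihood p q σ A y ≤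
      m * llrBound p q ^ 2 / c ^ 2 := by
  have hρ : ∀ a, ∑ b, bernPmf (posDisplayProb p q σ A a) b = 1 := fun a => sum_bernPmf _
  have hρ0 := bernPmf_posDisplayProb_nonneg σ A hp hq hpq
  have hcentered : ∀ a, ∑ b, bernPmf (posDisplayProb p q σ A a) b *
      (testLLR p q σ A a b - capacity p q) = 0 := fun a => by
    simp only [mul_sub, sum_sub_distrib, ← sum_mul, hρ, one_mul,
      sum_bernPmf_mul_testLLR σ A hpq.ne, sub_self]
  have hsum : ∀ y : Fin m → Bool, ∑ a, testLLR p q σ A a (y a) - m * capacity p q =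
      ∑ a, (testLLR p q σ A a (y a) - capacity p q) := fun y => by
    simp [sum_sub_distrib]
  simp_rw [hsum]
  refine (sum_filter_le_sum_mul_sq_div (fun y => prod_nonneg fun a _ => hρ0 a (y a))
    hc).trans ?_
  gcongr
  calc ∑ y, likelihood p q σ A y * (∑ a, (testLLR p q σ A a (y a) - capacity p q)) ^ 2
        = ∑ a, ∑ b, bernPmf (posDisplayProb p q σ A a) b *
            (testLLR p q σ A a b - capacity p q) ^ 2 :=
        sum_prod_mul_sq_sum hρ (fun a b => testLLR p q σ A a b - capacity p q) hcentered
    _ ≤ ∑ a, ∑ b, bernPmf (posDisplayProb p q σ A a) b * llrBound p q ^ 2 := by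
        refine sum_le_sum fun a _ => sum_le_sum fun b _ => ?_
        have := abs_le.mp (abs_testLLR_sub_le p q σ A a b)
        exact mul_le_mul_of_nonneg_left (sq_le_sq' this.1 this.2) (hρ0 a b)
    _ = m * llrBound p q ^ 2 := by
        simp only [← sum_mul, hρ, one_mul, sum_const, card_univ, Fintype.card_fin, nsmul_eq_mul]

lemma sum_decode_likelihood_le (hp : 0 ≤ p) (hq : 0 ≤ q) (hpq : p + q < 1)
    (decode : (Fin m → Bool) → Fin n → Bool) (Θ : Finset (Fin n → Bool)) {c : ℝ} (hc : 0 < c) :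
    ∑ σ ∈ Θ, ∑ y, (if decode y = σ then likelihood p q σ A y else 0) ≤
      Θ.card * (m * llrBound p q ^ 2 / c ^ 2) + Real.exp (m * capacity p q + c) := by
  have hτ : ∀ b, 0 < bernPmf (1 - capacityNegProb p q) b := bernPmf_pos
    (by linarith [capacityNegProb_lt_one p q]) (by linarith [capacityNegProb_pos p q])
  have hgood : ∀ σ y, ¬ c ≤ ∑ a, testLLR p q σ A a (y a) - m * capacity p q →
      likelihood p q σ A y ≤
        Real.exp (m * capacity p q + c) * ∏ a, bernPmf (1 - capacityNegProb p q) (y a) :=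
    fun σ y hy => prod_le_exp_mul_prod (fun a => bernPmf_posDisplayProb_nonneg σ A hp hq hpq a _)
      (fun a => hτ (y a)) (by unfold testLLR at hy; linarith)
  refine (sum_ite_decode_le Θ
    (fun σ y => prod_nonneg fun a _ => bernPmf_posDisplayProb_nonneg σ A hp hq hpq a (y a))
    (fun y => prod_nonneg fun a _ => (hτ (y a)).le) decode _ (Real.exp_nonneg _) hgood).trans ?_
  rw [sum_prod_eq_one fun _ => sum_bernPmf _, mul_one]
  gcongr
  calc _ ≤ ∑ _σ ∈ Θ, (m * llrBound p q ^ 2 / c ^ 2) :=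
        sum_le_sum fun σ _ => sum_likelihood_filter_le σ A hp hq hpq hc
    _ = _ := by rw [sum_const, nsmul_eq_mul]

lemma sum_sum_bernPmf_mul_displayedGen (f : (Fin m → Bool) → ℝ) :
    ∑ U : Fin m → Bool, ∑ V : Fin m → Bool,
        (∏ a, bernPmf p (U a)) * (∏ a, bernPmf q (V a)) * f (displayedGen σ A U V) =
      ∑ y, likelihood p q σ A y * f y := by
  refine (sum_sum_prod_mul_prod_mul_comp _ _
    (fun a u v => if ∃ i ∈ A a, σ i = true then !v else u) f).trans
    (sum_congr rfl fun y _ => congrArg (· * f y) (prod_congr rfl fun a _ => ?_))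
  by_cases h : ∃ i ∈ A a, σ i = true <;> cases y a <;>
    simp [h, bernPmf, posDisplayProb] <;> ring

end Channel

section Converse

variable {p q : ℝ} {n m : ℕ}

lemma genMeasure_real_success (hp : 0 ≤ p) (hq : 0 ≤ q) (hpq : p + q < 1) (k : ℕ)
    (ν : Measure (Fin m → Finset (Fin n))) [IsFiniteMeasure ν]
    (est : (Fin m → Finset (Fin n)) → (Fin m → Bool) → Fin n → Bool) :
    (genMeasure n m k ν p q).real
        {ω | est ω.2.1 (displayedGen ω.1 ω.2.1 ω.2.2.1 ω.2.2.2) = ω.1} =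
      ∑ A, ν.real {A} * (((sigmaSet n k).card : ℝ)⁻¹ *
        ∑ σ ∈ sigmaSet n k, ∑ y, if est A y = σ then likelihood p q σ A y else 0) := by
  have hbern : ∀ {r : ℝ}, 0 ≤ r → r ≤ 1 → ∀ U : Fin m → Bool,
      (Measure.pi fun _ : Fin m => bern r).real {U} = ∏ a, bernPmf r (U a) := by
    intro r h0 h1 U
    rw [measureReal_pi_singleton]
    exact prod_congr rfl fun a _ => bern_real_singleton h0 h1 (U a)
  have hsingleton : ∀ σ A U V, (genMeasure n m k ν p q).real {(σ, A, U, V)} =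
      (uniformFinset (sigmaSet n k)).real {σ} * (ν.real {A} *
        ((∏ a, bernPmf p (U a)) * ∏ a, bernPmf q (V a))) := by
    intro σ A U V
    simp only [genMeasure, ← Set.singleton_prod_singleton, measureReal_prod_prod,
      hbern hp (by linarith) U, hbern hq (by linarith) V]
  set u : (Fin n → Bool) → ℝ := fun σ => (uniformFinset (sigmaSet n k)).real {σ}
  calc _ = ∑ σ, ∑ A, u σ * (ν.real {A} * ∑ U : Fin m → Bool, ∑ V : Fin m → Bool,
        (∏ a, bernPmf p (U a)) * (∏ a, bernPmf q (V a)) *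
          if est A (displayedGen σ A U V) = σ then 1 else 0) := by
        rw [measureReal_eq_sum_ite]
        simp only [Fintype.sum_prod_type, Set.mem_ofPred_eq, hsingleton, mul_sum, mul_ite,
          mul_one, mul_zero, u]
    _ = ∑ A, ν.real {A} * ∑ σ, u σ * ∑ y, likelihood p q σ A y *
          if est A y = σ then 1 else 0 := by
        rw [sum_comm]
        refine sum_congr rfl fun A _ => ?_
        rw [mul_sum]
        refine sum_congr rfl fun σ _ => ?_
        rw [sum_sum_bernPmf_mul_displayedGen σ A fun y => if est A y = σ then 1 else 0]
        ring
    _ = _ := by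
        simp only [u, uniformFinset_real_singleton, ite_mul, zero_mul, sum_ite_mem,
          Finset.univ_inter, ← mul_sum, mul_ite, mul_one, mul_zero]

lemma genMeasure_real_success_le (hp : 0 ≤ p) (hq : 0 ≤ q) (hpq : p + q < 1) (k : ℕ)
    (ν : Measure (Fin m → Finset (Fin n))) [IsProbabilityMeasure ν]
    (est : (Fin m → Finset (Fin n)) → (Fin m → Bool) → Fin n → Bool) {c : ℝ} (hc : 0 < c) :
    (genMeasure n m k ν p q).real
        {ω | est ω.2.1 (displayedGen ω.1 ω.2.1 ω.2.2.1 ω.2.2.2) = ω.1} ≤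
      m * llrBound p q ^ 2 / c ^ 2 +
        Real.exp (m * capacity p q + c) / (sigmaSet n k).card := by
  set δ := m * llrBound p q ^ 2 / c ^ 2 + Real.exp (m * capacity p q + c) / (sigmaSet n k).card
  have hδ : 0 ≤ δ := by positivity
  have hdesign : ∀ A, ((sigmaSet n k).card : ℝ)⁻¹ * ∑ σ ∈ sigmaSet n k, ∑ y,
      (if est A y = σ then likelihood p q σ A y else 0) ≤ δ := by
    intro A
    rcases Nat.eq_zero_or_pos (sigmaSet n k).card with h0 | hpos
    · simpa [h0] using hδ
    rw [inv_mul_le_iff₀ (by exact_mod_cast hpos)]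
    calc _ ≤ _ := sum_decode_likelihood_le A hp hq hpq (est A) (sigmaSet n k) hc
      _ = _ := by simp only [δ]; field_simp
  rw [genMeasure_real_success hp hq hpq]
  calc _ ≤ ∑ A, ν.real {A} * δ :=
        sum_le_sum fun A _ => mul_le_mul_of_nonneg_left (hdesign A) measureReal_nonneg
    _ = δ := by rw [← sum_mul, sum_measureReal_singleton, coe_univ, probReal_univ, one_mul]

end Converse

lemma card_sigmaSet (n k : ℕ) : (sigmaSet n k).card = n.choose k := by
  rw [← (by simp : (powersetCard k (univ : Finset (Fin n))).card = n.choose k)]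
  refine card_nbij' (fun σ => univ.filter fun i => σ i = true) (fun s i => decide (i ∈ s))
    ?_ ?_ ?_ ?_ <;> intro x hx
  · simpa [sigmaSet] using hx
  · simpa [sigmaSet] using hx
  · ext i; simp
  · ext i; simp

lemma pow_mul_factorial_le_pow_mul_descFactorial {n k : ℕ} (hkn : k ≤ n) :
    n ^ k * k.factorial ≤ k ^ k * n.descFactorial k := by
  have hpow : ∀ a : ℕ, a ^ k = ∏ _i ∈ range k, a := by simp
  rw [← Nat.descFactorial_self, Nat.descFactorial_eq_prod_range,
    Nat.descFactorial_eq_prod_range, hpow n, hpow k, ← prod_mul_distrib, ← prod_mul_distrib]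
  refine prod_le_prod' fun i hi => ?_
  have hik : i < k := mem_range.mp hi
  zify [hik.le, hik.le.trans hkn]
  nlinarith

lemma div_pow_le_choose {n k : ℕ} (hkn : k ≤ n) : ((n : ℝ) / k) ^ k ≤ n.choose k := by
  rcases Nat.eq_zero_or_pos k with rfl | hk
  · simp
  have h : n ^ k * k.factorial ≤ n.choose k * k ^ k * k.factorial :=
    calc n ^ k * k.factorial ≤ k ^ k * n.descFactorial k :=
          pow_mul_factorial_le_pow_mul_descFactorial hkn
      _ = n.choose k * k ^ k * k.factorial := by
          rw [Nat.descFactorial_eq_factorial_mul_choose]; ring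
  have h' : ((n ^ k : ℕ) : ℝ) ≤ (n.choose k * k ^ k : ℕ) := by
    exact_mod_cast Nat.le_of_mul_le_mul_right h (Nat.factorial_pos k)
  push_cast at h'
  rw [div_pow, div_le_iff₀ (by positivity)]
  exact h'

lemma exp_mul_log_div_le_card_sigmaSet {n k : ℕ} (hkn : k ≤ n) :
    Real.exp (k * Real.log (n / k)) ≤ (sigmaSet n k).card := by
  rcases Nat.eq_zero_or_pos k with rfl | hk
  · simp [card_sigmaSet]
  have hn : (0 : ℝ) < n := by exact_mod_cast hk.trans_le hkn
  rw [Real.exp_nat_mul, Real.exp_log (by positivity), card_sigmaSet]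
  exact div_pow_le_choose hkn

/-- `genMeasure_real_success_le` at the threshold `c = ε k log (n / k) / 2`, with
`log |sigmaSet n k| ≥ k log (n / k)`. -/
lemma genMeasure_real_success_le_of_le_capacity {p q : ℝ} (hp : 0 ≤ p) (hq : 0 ≤ q)
    (hpq : p + q < 1) {ε : ℝ} (hε : 0 < ε) {n m k : ℕ} (hkn : k ≤ n)
    (hK : 0 < k * Real.log (n / k))
    (hm : (m : ℝ) ≤ (1 - ε) * (1 / capacity p q * (k * Real.log (n / k))))
    (ν : Measure (Fin m → Finset (Fin n))) [IsProbabilityMeasure ν]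
    (est : (Fin m → Finset (Fin n)) → (Fin m → Bool) → Fin n → Bool) :
    (genMeasure n m k ν p q).real
        {ω | est ω.2.1 (displayedGen ω.1 ω.2.1 ω.2.2.1 ω.2.2.2) = ω.1} ≤
      4 * llrBound p q ^ 2 / (capacity p q * ε ^ 2) / (k * Real.log (n / k)) +
        Real.exp (-(ε / 2 * (k * Real.log (n / k)))) := by
  set K := k * Real.log (n / k)
  have hcap := capacity_pos hp hq hpq
  have hmK : m * capacity p q ≤ (1 - ε) * K := by
    calc m * capacity p q ≤ (1 - ε) * (1 / capacity p q * K) * capacity p q := by gcongr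
      _ = (1 - ε) * K := by field_simp
  refine (genMeasure_real_success_le hp hq hpq k ν est (c := ε * K / 2) (by positivity)).trans
    (add_le_add ?_ ?_)
  · rw [div_le_div_iff₀ (by positivity) hK]
    have : (m : ℝ) * capacity p q ≤ K := by nlinarith
    calc m * llrBound p q ^ 2 * K = 4 * llrBound p q ^ 2 * (m * K) / 4 := by ring
      _ ≤ 4 * llrBound p q ^ 2 * (K / capacity p q * K) / 4 := by
          gcongr
          rwa [le_div_iff₀ hcap]
      _ = _ := by field_simp; ring
  · calc _ ≤ Real.exp (m * capacity p q + ε * K / 2) / Real.exp K :=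
          div_le_div_of_nonneg_left (Real.exp_nonneg _) (Real.exp_pos K)
            (exp_mul_log_div_le_card_sigmaSet hkn)
      _ = Real.exp (m * capacity p q + ε * K / 2 - K) := (Real.exp_sub _ _).symm
      _ ≤ _ := Real.exp_le_exp.mpr (by linarith)

lemma ceil_rpow_le_self {θ : ℝ} (hθ : θ ≤ 1) {n : ℕ} (hn : 1 ≤ n) : ⌈(n : ℝ) ^ θ⌉₊ ≤ n :=
  Nat.ceil_le.mpr (Real.rpow_le_self_of_one_le (by exact_mod_cast hn) hθ)

lemma tendsto_natCast_div_ceil_rpow {θ : ℝ} (hθ0 : 0 ≤ θ) (hθ1 : θ < 1) :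
    Tendsto (fun n : ℕ => (n : ℝ) / ⌈(n : ℝ) ^ θ⌉₊) atTop atTop := by
  have hpow : Tendsto (fun n : ℕ => (n : ℝ) ^ (1 - θ) / 2) atTop atTop :=
    ((tendsto_rpow_atTop (by linarith)).comp tendsto_natCast_atTop_atTop).atTop_div_const two_pos
  refine tendsto_atTop_mono' atTop ?_ hpow
  filter_upwards [eventually_ge_atTop 1] with n hn
  have hn' : (1 : ℝ) ≤ n := by exact_mod_cast hn
  have hθpow : 1 ≤ (n : ℝ) ^ θ := Real.one_le_rpow hn' hθ0
  have hceil : (⌈(n : ℝ) ^ θ⌉₊ : ℝ) ≤ 2 * (n : ℝ) ^ θ := by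
    linarith [Nat.ceil_lt_add_one (zero_le_one.trans hθpow)]
  calc (n : ℝ) ^ (1 - θ) / 2 = n / (2 * (n : ℝ) ^ θ) := by
        rw [Real.rpow_sub (by linarith), Real.rpow_one]; ring
    _ ≤ n / ⌈(n : ℝ) ^ θ⌉₊ := by gcongr

lemma tendsto_ceil_rpow_mul_log {θ : ℝ} (hθ0 : 0 ≤ θ) (hθ1 : θ < 1) :
    Tendsto (fun n : ℕ => (⌈(n : ℝ) ^ θ⌉₊ : ℝ) * Real.log (n / ⌈(n : ℝ) ^ θ⌉₊)) atTop atTop := by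
  have hlog := Real.tendsto_log_atTop.comp (tendsto_natCast_div_ceil_rpow hθ0 hθ1)
  refine tendsto_atTop_mono' atTop ?_ hlog
  filter_upwards [eventually_ge_atTop 1, hlog.eventually_ge_atTop 0] with n hn hpos
  have : (1 : ℝ) ≤ ⌈(n : ℝ) ^ θ⌉₊ := by
    exact_mod_cast Nat.one_le_ceil_iff.mpr (Real.rpow_pos_of_pos (by exact_mod_cast hn) θ)
  exact le_mul_of_one_le_left hpos this

lemma tendsto_div_add_exp_neg_mul (a : ℝ) {b : ℝ} (hb : 0 < b) :
    Tendsto (fun x => a / x + Real.exp (-(b * x))) atTop (nhds 0) := by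
  simpa using (tendsto_const_nhds.div_atTop tendsto_id).add
    (Real.tendsto_exp_neg_atTop_nhds_zero.comp (tendsto_id.const_mul_atTop hb))

/-- **Universal converse for the p–q channel** (Theorem 2.3).  With
`φ = (h(p)-h(q))/(1-p-q)` and `m_COUNT = k·log(n/k)/D(q‖1/(1+e^φ))`, if
`m ≤ (1-ε)·m_COUNT` then for every (random) non-adaptive test design and every estimator
of `σ` from the design and the displayed outcomes, the probability of exact recovery does
not tend to `1`. -/
theorem noisy_group_testing_converse
    (p q θ ε : ℝ)
    (hp : 0 ≤ p) (hq : 0 ≤ q) (hpq : p + q < 1)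
    (hθ0 : 0 < θ) (hθ1 : θ < 1) (hε : 0 < ε)
    (k m : ℕ → ℕ)
    (hk : ∀ n, k n = ⌈(n : ℝ) ^ θ⌉₊)
    (hm : ∀ n : ℕ, (m n : ℝ) ≤ (1 - ε) *
      (1 / klBer q (1 / (1 + Real.exp ((binEnt p - binEnt q) / (1 - p - q)))) *
        (k n * Real.log (n / k n))))
    (ν : ∀ n : ℕ, Measure (Fin (m n) → Finset (Fin n)))
    (hν : ∀ n, IsProbabilityMeasure (ν n))
    (est : ∀ n : ℕ, (Fin (m n) → Finset (Fin n)) → (Fin (m n) → Bool) → (Fin n → Bool)) :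
    ¬ Filter.Tendsto
      (fun n => genMeasure n (m n) (k n) (ν n) p q
        {ω | est n ω.2.1 (displayedGen ω.1 ω.2.1 ω.2.2.1 ω.2.2.2) = ω.1})
      Filter.atTop (nhds 1) := by
  intro hlim
  obtain rfl : k = fun n : ℕ => ⌈(n : ℝ) ^ θ⌉₊ := funext hk
  set K : ℕ → ℝ := fun n => (⌈(n : ℝ) ^ θ⌉₊ : ℝ) * Real.log (n / ⌈(n : ℝ) ^ θ⌉₊)
  set a := 4 * llrBound p q ^ 2 / (capacity p q * ε ^ 2)
  have hK : Tendsto K atTop atTop := tendsto_ceil_rpow_mul_log hθ0.le hθ1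
  have hbound : ∀ᶠ n in atTop, (genMeasure n (m n) ⌈(n : ℝ) ^ θ⌉₊ (ν n) p q).real
      {ω | est n ω.2.1 (displayedGen ω.1 ω.2.1 ω.2.2.1 ω.2.2.2) = ω.1} ≤
        a / K n + Real.exp (-(ε / 2 * K n)) := by
    filter_upwards [hK.eventually_gt_atTop 0, eventually_ge_atTop 1] with n hKn hn
    exact genMeasure_real_success_le_of_le_capacity hp hq hpq hε (ceil_rpow_le_self hθ1.le hn)
      hKn (hm n) (ν n) (est n)
  have hzero := (tendsto_div_add_exp_neg_mul a (half_pos hε)).comp hK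
  have hone := (ENNReal.tendsto_toReal ENNReal.one_ne_top).comp hlim
  exact absurd (le_of_tendsto_of_tendsto hone hzero hbound) (by norm_num)

end
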